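/- Let P be an ordered set of strings and define A_F(P) = {(u,v) ∈ Decomp_BWT(P)² : writing u = [i,j], the largest index k < i satisfying LRS(P)[k] ≤ LCP(P)[l] for all l ∈ [k+1, i] exists and belongs to v}. Then for all u, v ∈ Decomp_BWT(P), (u,v) ∈ A_F(P) if and only if Dec_Pre[v] is the longest proper suffix of Dec_Pre[u] among the elements of Prefix(←P.S). Consequently the directed graph (Decomp_BWT(P), A_F(P)) is isomorphic, via the bijection Dec_Pre, to the Aho–Corasick failure-link graph ACFL(←P.S). -/

import Mathlib

namespace BwtXbw

variable {α β : Type*}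

/-- An ordered set of strings: a nonempty list of distinct nonempty strings over `α`
(the list order is the enumeration `t_1, …, t_n`). -/
structure OSS (α : Type*) where
  strs : List (List α)
  strs_ne : strs ≠ []
  nodup : strs.Nodup
  mem_ne : ∀ s ∈ strs, s ≠ []

/-- Embed a symbol of `α` into `WithBot α`; `⊥` plays the role of the separator `$`,
which is smaller than every symbol of the alphabet. -/
def sym (a : α) : WithBot α := (a : WithBot α)

/-- The multi-string `m_P = t_1 $ t_2 $ ⋯ $ t_n $` over `WithBot α`. -/
def mP (P : OSS α) : List (WithBot α) :=
  (P.strs.map (fun s => s.map sym ++ [⊥])).flatten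

/-- `SA` is a (0-based) suffix array for `m`: a bijection of `[0, |m|)` onto itself
listing the suffixes of `m` in increasing lexicographic order. -/
def IsSuffixArray [LinearOrder α] (m : List (WithBot α)) (SA : ℕ → ℕ) : Prop :=
  Set.BijOn SA (Set.Iio m.length) (Set.Iio m.length) ∧
  ∀ i j : ℕ, i < j → j < m.length →
    List.Lex (· < ·) (m.drop (SA i)) (m.drop (SA j))

/-- `LRS(P)[i]` (0-based): number of symbols of `m` from position `SA i` up to (but not
including) the first separator at or after position `SA i`. -/
def lrs [LinearOrder α] (m : List (WithBot α)) (SA : ℕ → ℕ) (i : ℕ) : ℕ :=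
  ((m.drop (SA i)).takeWhile (fun c => decide (c ≠ ⊥))).length

/-- Length of the longest common prefix of two lists. -/
def lcpLen [DecidableEq β] : List β → List β → ℕ
  | a :: s, b :: t => if a = b then lcpLen s t + 1 else 0
  | _, _ => 0

/-- `LCP(P)[i] = min(LCP(m_P)[i], LRS(P)[i])` (0-based; `0` at `i = 0`). -/
def lcpP [LinearOrder α] (m : List (WithBot α)) (SA : ℕ → ℕ) (i : ℕ) : ℕ :=
  if i = 0 then 0
  else min (lcpLen (m.drop (SA (i - 1))) (m.drop (SA i))) (lrs m SA i)

/-- `Decomp_BWT(P)`: the maximal integer intervals `[u.1, u.2] ⊆ [0, |m|)` such that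
`LCP(P)[k] = LRS(P)[k]` for every interior position `k ∈ [u.1+1, u.2]`. -/
def DecompBWT [LinearOrder α] (m : List (WithBot α)) (SA : ℕ → ℕ) : Set (ℕ × ℕ) :=
  { u | u.1 ≤ u.2 ∧ u.2 < m.length ∧
        (∀ k, u.1 < k → k ≤ u.2 → lcpP m SA k = lrs m SA k) ∧
        (u.1 = 0 ∨ lcpP m SA u.1 ≠ lrs m SA u.1) ∧
        (u.2 + 1 = m.length ∨ lcpP m SA (u.2 + 1) ≠ lrs m SA (u.2 + 1)) }

/-- `Dec_Pre[u]`: the reverse of `m[SA u.1 .. SA u.1 + LRS[u.1] − 1]`. -/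
def decPre [LinearOrder α] (m : List (WithBot α)) (SA : ℕ → ℕ) (u : ℕ × ℕ) :
    List (WithBot α) :=
  ((m.drop (SA u.1)).take (lrs m SA u.1)).reverse

/-- `Prefix(←P.S)`: all prefixes (including the empty string) of the reversed strings of
`P.S`, viewed inside `WithBot α`. -/
def revPrefixes (P : OSS α) : Set (List (WithBot α)) :=
  { p | ∃ s ∈ P.strs, p <+: s.reverse.map sym }

/-- `Prefix(P.S)`: all prefixes (including the empty string) of the strings of `P.S`,
viewed inside `WithBot α`. -/
def fwdPrefixes (P : OSS α) : Set (List (WithBot α)) :=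
  { p | ∃ s ∈ P.strs, p <+: s.map sym }

/-- `BWT(P)[i]` (0-based): `m[SA i − 1]` if `SA i > 0`, and the last symbol `$ = ⊥`
of `m` otherwise. -/
def bwtArr (m : List (WithBot α)) (SA : ℕ → ℕ) (i : ℕ) : WithBot α :=
  if SA i = 0 then ⊥ else m.getD (SA i - 1) ⊥

/-- `C[c]`: the number of positions of `m` holding a symbol strictly smaller than `c`. -/
def Cfun [LinearOrder α] (m : List (WithBot α)) (c : WithBot α) : ℕ :=
  (m.filter (fun b => decide (b < c))).length

/-- The Last-to-First mapping (0-based):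
`LF[i] = C[BWT[i]] + #{k < i : BWT[k] = BWT[i]}`. -/
def LF [LinearOrder α] (m : List (WithBot α)) (SA : ℕ → ℕ) (i : ℕ) : ℕ :=
  Cfun m (bwtArr m SA i) +
    ((List.range i).filter (fun k => decide (bwtArr m SA k = bwtArr m SA i))).length

/-- The arc set `A_T(P)` on `Decomp_BWT(P)`. -/
def AT [LinearOrder α] (m : List (WithBot α)) (SA : ℕ → ℕ) :
    Set ((ℕ × ℕ) × (ℕ × ℕ)) :=
  { uv | uv.1 ∈ DecompBWT m SA ∧ uv.2 ∈ DecompBWT m SA ∧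
      ∃ x, uv.1.1 ≤ x ∧ x ≤ uv.1.2 ∧ bwtArr m SA x ≠ ⊥ ∧
        uv.2.1 ≤ LF m SA x ∧ LF m SA x ≤ uv.2.2 }

/-- Arc relation of the Aho–Corasick tree on the vertex set `Pref`:
`p` is the longest proper prefix of `q` belonging to `Pref`. -/
def ACTedge (Pref : Set (List β)) (p q : List β) : Prop :=
  p ∈ Pref ∧ q ∈ Pref ∧ p ≠ q ∧ p <+: q ∧
    ∀ r ∈ Pref, r ≠ q → r <+: q → r.length ≤ p.length

/-- `k` is a failure candidate for the position `i`: `k < i` and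
`LRS[k] ≤ LCP[l]` for all `l ∈ [k+1, i]`. -/
def FailCand [LinearOrder α] (m : List (WithBot α)) (SA : ℕ → ℕ) (i k : ℕ) : Prop :=
  k < i ∧ ∀ l, k < l → l ≤ i → lrs m SA k ≤ lcpP m SA l

/-- The arc set `A_F(P)` on `Decomp_BWT(P)`: the largest failure candidate for `u.1`
exists and lies in `v`. -/
def AF [LinearOrder α] (m : List (WithBot α)) (SA : ℕ → ℕ) :
    Set ((ℕ × ℕ) × (ℕ × ℕ)) :=
  { uv | uv.1 ∈ DecompBWT m SA ∧ uv.2 ∈ DecompBWT m SA ∧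
      ∃ k, FailCand m SA uv.1.1 k ∧ (∀ k', FailCand m SA uv.1.1 k' → k' ≤ k) ∧
        uv.2.1 ≤ k ∧ k ≤ uv.2.2 }

/-- Arc relation of the Aho–Corasick failure-link graph on the vertex set `Pref`:
`q` is the longest proper suffix of `p` belonging to `Pref`. -/
def ACFLedge (Pref : Set (List β)) (p q : List β) : Prop :=
  p ∈ Pref ∧ q ∈ Pref ∧ p ≠ q ∧ q <:+ p ∧
    ∀ r ∈ Pref, r ≠ p → r <:+ p → r.length ≤ q.length

/-- The Run-Length measure `d_B(P) = #{i : BWT[i] ≠ BWT[i+1]}` (0-based, `i` ranging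
over the first `|m| − 1` positions). -/
def dB [LinearOrder α] (m : List (WithBot α)) (SA : ℕ → ℕ) : ℕ :=
  ((List.range (m.length - 1)).filter
      (fun i => decide (bwtArr m SA i ≠ bwtArr m SA (i + 1)))).length

/-- `P` is topologically planar: for every prefix `p` of the reverse of some string of
`P.S`, the indices `r` with `p` a prefix of `reverse(t_r)` form a set of consecutive
integers. -/
def TopPlanar [DecidableEq α] (P : OSS α) : Prop :=
  ∀ p : List α, (∃ s ∈ P.strs, p <+: s.reverse) →
    ∀ r₁ r₂ r₃ : ℕ, r₁ ≤ r₂ → r₂ ≤ r₃ → r₃ < P.strs.length →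
      p <+: (P.strs.getD r₁ []).reverse → p <+: (P.strs.getD r₃ []).reverse →
      p <+: (P.strs.getD r₂ []).reverse

/-- `Letter[i]`: the first symbol of the suffix of rank `i`, i.e. `m[SA i]`. -/
def letterArr (m : List (WithBot α)) (SA : ℕ → ℕ) (i : ℕ) : WithBot α :=
  m.getD (SA i) ⊥

/-- 0-based select: the position of the `(j+1)`-st occurrence of `c` in
`f 0, f 1, …, f (N−1)`. -/
def select0 [LinearOrder α] (f : ℕ → WithBot α) (N : ℕ) (c : WithBot α) (j : ℕ) : ℕ :=
  (((List.range N).filter (fun k => decide (f k = c)))).getD j 0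

/-- The inverse Last-to-First mapping (0-based):
`RLF[i] = select_{Letter[i]}(BWT, i − C[Letter[i]])`. -/
def RLF [LinearOrder α] (m : List (WithBot α)) (SA : ℕ → ℕ) (i : ℕ) : ℕ :=
  select0 (bwtArr m SA) m.length (letterArr m SA i)
    (i - Cfun m (letterArr m SA i))

/-- `d_A(T') = #{i : T'[i] ≠ T'[i+1]}`, the number of adjacent mismatches. -/
def dA [DecidableEq β] : List β → ℕ
  | a :: b :: t => (if a = b then 0 else 1) + dA (b :: t)
  | _ => 0

/-- `T'` is valid for the block decomposition `B` (an interval partition given by the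
lengths of the blocks): `T'` splits into blocks of the same lengths as those of `B`,
with the same symbol set blockwise. -/
def ValidArr [DecidableEq β] (B : List (List β)) (T' : List β) : Prop :=
  ∃ B' : List (List β),
    List.Forall₂ (fun b b' => b.length = b'.length ∧ b.toFinset = b'.toFinset) B B' ∧
    B'.flatten = T'

/-- `T'` is optimal for the block decomposition `B`: valid and of minimal `d_A`. -/
def OptimalArr [DecidableEq β] (B : List (List β)) (T' : List β) : Prop :=
  ValidArr B T' ∧ ∀ T'' : List β, ValidArr B T'' → dA T' ≤ dA T''

/-!
Every suffix of the multi-string reads `w ⊥ rest`, where its string part `w` is a suffix of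
one of the input strings. Sorting the suffixes gathers equal string parts into runs of
consecutive ranks, and `LCP = LRS` at rank `i` says exactly that ranks `i - 1` and `i` share
their string part; so the blocks of `Decomp_BWT` are these runs and `Dec_Pre`, the reversed
string part, is a bijection onto `Prefix(←P.S)`. A proper prefix `p` of a string part `w` is
shared by every suffix ranked between one that starts with `p ⊥` and one that starts with `w`;
hence the failure candidates of a block are the ranks whose string part is a proper prefix of
the block's, and the largest of them lies in the block of the longest such prefix.
-/

open List

section Lex

variable [LinearOrder β]

theorem lex_append_left_iff {a b : List β} :
    ∀ p : List β, Lex (· < ·) (p ++ a) (p ++ b) ↔ Lex (· < ·) a b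
  | [] => Iff.rfl
  | x :: p => by rw [cons_append, cons_append, lex_cons_iff, lex_append_left_iff p]

theorem prefix_of_lex_between : ∀ {p a b c : List β},
    p <+: a → p <+: c → Lex (· < ·) a b → Lex (· < ·) b c → p <+: b
  | [], _, _, _, _, _, _, _ => nil_prefix
  | _ :: _, _, [], _, ⟨_, rfl⟩, _, hab, _ => by cases hab
  | x :: p, _, y :: b, _, ⟨a', rfl⟩, ⟨c', rfl⟩, hab, hbc => by
    rw [cons_append] at hab hbc
    cases hab with
    | rel hxy =>
      cases hbc with
      | rel hyx => exact absurd (hxy.trans hyx) (lt_irrefl x)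
      | cons => exact absurd hxy (lt_irrefl x)
    | cons hab =>
      cases hbc with
      | rel hyx => exact absurd hyx (lt_irrefl x)
      | cons hbc =>
        exact cons_prefix_cons.2 ⟨rfl, prefix_of_lex_between ⟨a', rfl⟩ ⟨c', rfl⟩ hab hbc⟩

end Lex

section LcpLen

variable [DecidableEq β]

theorem length_le_lcpLen_of_prefix :
    ∀ {p a b : List β}, p <+: a → p <+: b → p.length ≤ lcpLen a b
  | [], _, _, _, _ => Nat.zero_le _
  | x :: p, _, _, ⟨a', rfl⟩, ⟨b', rfl⟩ => by
    simpa [lcpLen] using length_le_lcpLen_of_prefix (p := p) ⟨a', rfl⟩ ⟨b', rfl⟩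

theorem take_lcpLen_eq : ∀ a b : List β, a.take (lcpLen a b) = b.take (lcpLen a b)
  | [], _ | _ :: _, [] => by simp [lcpLen]
  | x :: a, y :: b => by
    by_cases h : x = y
    · simp [lcpLen, h, take_lcpLen_eq a b]
    · simp [lcpLen, h]

theorem take_eq_take_of_le_lcpLen {a b : List β} {k : ℕ} (h : k ≤ lcpLen a b) :
    a.take k = b.take k := by
  rw [← min_eq_left h, ← take_take, ← take_take, take_lcpLen_eq]

theorem take_eq_take_of_le_lcpLen_succ (f : ℕ → List β) {K k i : ℕ} (hki : k ≤ i)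
    (h : ∀ l, k ≤ l → l < i → K ≤ lcpLen (f l) (f (l + 1))) :
    (f i).take K = (f k).take K := by
  induction i, hki using Nat.le_induction with
  | base => rfl
  | succ i hki ih =>
    rw [← take_eq_take_of_le_lcpLen (h i hki (Nat.lt_succ_self i))]
    exact ih fun l hkl hli => h l hkl (hli.trans (Nat.lt_succ_self i))

end LcpLen

theorem ACFLedge_image_reverse_iff (S : Set (List β)) (p q : List β) :
    ACFLedge (reverse '' S) p.reverse q.reverse ↔ ACTedge S q p := by
  simp only [ACFLedge, ACTedge, reverse_injective.mem_set_image, ne_eq, reverse_inj,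
    reverse_suffix, Set.forall_mem_image, length_reverse]
  constructor <;> rintro ⟨hp, hq, hne, hqp, hmax⟩ <;>
    exact ⟨hq, hp, Ne.symm hne, hqp, hmax⟩

section Separator

variable [LinearOrder α]

def sepPrefix (l : List (WithBot α)) : List (WithBot α) :=
  l.takeWhile (fun c => decide (c ≠ ⊥))

theorem bot_not_mem_sepPrefix (l : List (WithBot α)) : ⊥ ∉ sepPrefix l := fun h => by
  simpa using mem_takeWhile_imp h

theorem sepPrefix_append_bot_cons {p : List (WithBot α)} (hp : ⊥ ∉ p)
    (t : List (WithBot α)) : sepPrefix (p ++ ⊥ :: t) = p := by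
  rw [sepPrefix, takeWhile_append_of_pos (fun c hc => by simpa using ne_of_mem_of_not_mem hc hp)]
  simp

theorem prefix_sepPrefix {p l : List (WithBot α)} (hpl : p <+: l) (hp : ⊥ ∉ p) :
    p <+: sepPrefix l := by
  obtain ⟨t, rfl⟩ := hpl
  rw [sepPrefix, takeWhile_append_of_pos (fun c hc => by simpa using ne_of_mem_of_not_mem hc hp)]
  exact prefix_append _ _

theorem sepPrefix_append_bot_prefix :
    ∀ {l : List (WithBot α)}, ⊥ ∈ l → sepPrefix l ++ [⊥] <+: l
  | c :: l, h => by
    by_cases hc : c = ⊥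
    · subst hc
      simp [sepPrefix]
    · have hl : ⊥ ∈ l := (mem_cons.1 h).resolve_left (Ne.symm hc)
      simpa [sepPrefix, hc] using sepPrefix_append_bot_prefix hl

end Separator

section SuffixArray

variable [LinearOrder α] {m : List (WithBot α)} {SA : ℕ → ℕ}

def strPart (m : List (WithBot α)) (SA : ℕ → ℕ) (i : ℕ) : List (WithBot α) :=
  sepPrefix (m.drop (SA i))

def strParts (m : List (WithBot α)) (SA : ℕ → ℕ) : Set (List (WithBot α)) :=
  strPart m SA '' Set.Iio m.length

theorem lrs_eq_length_strPart (i : ℕ) : lrs m SA i = (strPart m SA i).length := rfl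

theorem strPart_prefix (i : ℕ) : strPart m SA i <+: m.drop (SA i) := takeWhile_prefix _

theorem decPre_eq_reverse_strPart (u : ℕ × ℕ) :
    decPre m SA u = (strPart m SA u.1).reverse := by
  rw [decPre, lrs_eq_length_strPart, ← prefix_iff_eq_take.1 (strPart_prefix u.1)]

theorem strPart_eq_of_prefix {p : List (WithBot α)} {j : ℕ}
    (h : p ++ [⊥] <+: m.drop (SA j)) (hp : ⊥ ∉ p) : strPart m SA j = p := by
  obtain ⟨t, ht⟩ := h
  rw [strPart, ← ht, append_assoc, singleton_append, sepPrefix_append_bot_cons hp]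

theorem strPart_append_bot_prefix (hSA : IsSuffixArray m SA) (hm : [⊥] <:+ m) {i : ℕ}
    (hi : i < m.length) : strPart m SA i ++ [⊥] <+: m.drop (SA i) := by
  refine sepPrefix_append_bot_prefix ?_
  obtain ⟨m', rfl⟩ := hm
  have hSAi : SA i < m'.length + 1 := by simpa using hSA.1.1 hi
  rw [drop_append_of_le_length (by omega)]
  exact mem_append_right _ (mem_singleton_self _)

theorem prefix_drop_of_between (hSA : IsSuffixArray m SA) {p : List (WithBot α)} {a b l : ℕ}
    (ha : p <+: m.drop (SA a)) (hb : p <+: m.drop (SA b)) (hal : a ≤ l) (hlb : l ≤ b)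
    (hbN : b < m.length) : p <+: m.drop (SA l) := by
  rcases hal.eq_or_lt with rfl | hal
  · exact ha
  rcases hlb.eq_or_lt with rfl | hlb
  · exact hb
  exact prefix_of_lex_between ha hb (hSA.2 a l hal (hlb.trans hbN)) (hSA.2 l b hlb hbN)

theorem strPart_eq_of_between (hSA : IsSuffixArray m SA) (hm : [⊥] <:+ m) {i j k : ℕ}
    (hij : i ≤ j) (hjk : j ≤ k) (hk : k < m.length) (h : strPart m SA i = strPart m SA k) :
    strPart m SA j = strPart m SA i := by
  have hk' := strPart_append_bot_prefix hSA hm hk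
  rw [← h] at hk'
  exact strPart_eq_of_prefix (prefix_drop_of_between hSA
    (strPart_append_bot_prefix hSA hm (hij.trans_lt (hjk.trans_lt hk))) hk' hij hjk hk)
    (bot_not_mem_sepPrefix _)

theorem lt_of_strPart_prefix (hSA : IsSuffixArray m SA) (hm : [⊥] <:+ m) {i j : ℕ}
    (hi : i < m.length) (hj : j < m.length) (hpre : strPart m SA i <+: strPart m SA j)
    (hne : strPart m SA i ≠ strPart m SA j) : i < j := by
  obtain ⟨d, hd⟩ := hpre
  obtain ⟨c, d, rfl⟩ : ∃ c d', d = c :: d' :=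
    exists_cons_of_ne_nil (by rintro rfl; exact hne (by simpa using hd))
  have hc : c ≠ ⊥ := fun hc =>
    bot_not_mem_sepPrefix (m.drop (SA j)) (by rw [← strPart, ← hd, hc]; simp)
  obtain ⟨r, hr⟩ := strPart_append_bot_prefix hSA hm hi
  obtain ⟨r', hr'⟩ := (prefix_append (strPart m SA j) [⊥]).trans
    (strPart_append_bot_prefix hSA hm hj)
  have hlex : Lex (· < ·) (m.drop (SA i)) (m.drop (SA j)) := by
    rw [← hr, ← hr', ← hd]
    simpa using Lex.append_left _ (Lex.rel (bot_lt_iff_ne_bot.2 hc)) (strPart m SA i)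
  by_contra! hji
  rcases hji.eq_or_lt with rfl | hji
  · exact hne rfl
  · exact asymm hlex (hSA.2 j i hji hi)

end SuffixArray

section Blocks

variable [LinearOrder α] {m : List (WithBot α)} {SA : ℕ → ℕ}

theorem lcpP_eq_lrs_iff (hSA : IsSuffixArray m SA) (hm : [⊥] <:+ m) {i : ℕ} (h0 : 0 < i)
    (hi : i < m.length) :
    lcpP m SA i = lrs m SA i ↔ strPart m SA (i - 1) = strPart m SA i := by
  have hi1 : i - 1 < m.length := by omega
  rw [lcpP, if_neg h0.ne', min_eq_right_iff, lrs_eq_length_strPart]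
  constructor
  · intro h
    have htake := take_eq_take_of_le_lcpLen h
    rw [← prefix_iff_eq_take.1 (strPart_prefix i)] at htake
    obtain ⟨w, hw⟩ : strPart m SA i <+: m.drop (SA (i - 1)) := htake ▸ take_prefix _ _
    have hlex := hSA.2 (i - 1) i (by omega) hi
    obtain ⟨r, hr⟩ := strPart_append_bot_prefix hSA hm hi
    rw [← hw, ← hr, append_assoc, lex_append_left_iff] at hlex
    rcases w with _ | ⟨c, w⟩
    · have hbot : ⊥ ∈ m.drop (SA (i - 1)) :=
        (strPart_append_bot_prefix hSA hm hi1).subset (mem_append_right _ (mem_singleton_self _))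
      rw [← hw, append_nil] at hbot
      exact absurd hbot (bot_not_mem_sepPrefix _)
    · cases hlex with
      | rel hc => exact absurd hc not_lt_bot
      | cons => exact strPart_eq_of_prefix ⟨w, by rw [← hw]; simp⟩ (bot_not_mem_sepPrefix _)
  · intro h
    have hprev := (prefix_append _ [⊥]).trans (strPart_append_bot_prefix hSA hm hi1)
    rw [h] at hprev
    exact length_le_lcpLen_of_prefix hprev (strPart_prefix i)

theorem strPart_eq_of_mem_DecompBWT (hSA : IsSuffixArray m SA) (hm : [⊥] <:+ m) {u : ℕ × ℕ}
    (hu : u ∈ DecompBWT m SA) {k : ℕ} (hk1 : u.1 ≤ k) (hk2 : k ≤ u.2) :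
    strPart m SA k = strPart m SA u.1 := by
  induction k, hk1 using Nat.le_induction with
  | base => rfl
  | succ k hk ih =>
    rw [← ih (by omega)]
    exact ((lcpP_eq_lrs_iff hSA hm (by omega) (hk2.trans_lt hu.2.1)).1
      (hu.2.2.1 (k + 1) (by omega) hk2)).symm

theorem mem_Icc_of_strPart_eq (hSA : IsSuffixArray m SA) (hm : [⊥] <:+ m) {u : ℕ × ℕ}
    (hu : u ∈ DecompBWT m SA) {k : ℕ} (hk : k < m.length)
    (h : strPart m SA k = strPart m SA u.1) : u.1 ≤ k ∧ k ≤ u.2 := by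
  obtain ⟨h12, h2N, -, hstart, hend⟩ := id hu
  constructor
  · by_contra! hku
    refine hstart.resolve_left (by omega) ((lcpP_eq_lrs_iff hSA hm (by omega) (by omega)).2 ?_)
    rw [strPart_eq_of_between hSA hm (j := u.1 - 1) (by omega) (by omega) (by omega) h, h]
  · by_contra! hku
    refine hend.resolve_left (by omega) ((lcpP_eq_lrs_iff hSA hm (by omega) (by omega)).2 ?_)
    rw [Nat.add_sub_cancel, strPart_eq_of_mem_DecompBWT hSA hm hu h12 le_rfl,
      strPart_eq_of_between hSA hm (j := u.2 + 1) (by omega) hku hk h.symm]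

theorem eq_of_strPart_eq (hSA : IsSuffixArray m SA) (hm : [⊥] <:+ m) {u v : ℕ × ℕ}
    (hu : u ∈ DecompBWT m SA) (hv : v ∈ DecompBWT m SA)
    (h : strPart m SA u.1 = strPart m SA v.1) : u = v := by
  have hu2 := strPart_eq_of_mem_DecompBWT hSA hm hu hu.1 le_rfl
  have hv2 := strPart_eq_of_mem_DecompBWT hSA hm hv hv.1 le_rfl
  have := mem_Icc_of_strPart_eq hSA hm hu (hv.1.trans_lt hv.2.1) h.symm
  have := mem_Icc_of_strPart_eq hSA hm hv (hu.1.trans_lt hu.2.1) h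
  have := mem_Icc_of_strPart_eq hSA hm hu hv.2.1 (hv2.trans h.symm)
  have := mem_Icc_of_strPart_eq hSA hm hv hu.2.1 (hu2.trans h)
  exact Prod.ext (by omega) (by omega)

/-- The block of a rank `i` runs from the least to the greatest rank sharing its string part. -/
theorem exists_mem_DecompBWT_strPart_eq (hSA : IsSuffixArray m SA) (hm : [⊥] <:+ m) {i : ℕ}
    (hi : i < m.length) : ∃ u ∈ DecompBWT m SA, strPart m SA u.1 = strPart m SA i := by
  classical
  set S := (Finset.range m.length).filter (fun k => strPart m SA k = strPart m SA i)
  have hS : i ∈ S := Finset.mem_filter.2 ⟨Finset.mem_range.2 hi, rfl⟩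
  have hmemS {k : ℕ} : k ∈ S ↔ k < m.length ∧ strPart m SA k = strPart m SA i := by
    simp [S]
  obtain ⟨haN, ha⟩ := hmemS.1 (S.min'_mem ⟨i, hS⟩)
  obtain ⟨hbN, hb⟩ := hmemS.1 (S.max'_mem ⟨i, hS⟩)
  set a := S.min' ⟨i, hS⟩
  set b := S.max' ⟨i, hS⟩
  have hab : a ≤ b := (S.min'_le i hS).trans (S.le_max' i hS)
  have hall {k : ℕ} (h1 : a ≤ k) (h2 : k ≤ b) : strPart m SA k = strPart m SA i :=
    (strPart_eq_of_between hSA hm h1 h2 hbN (ha.trans hb.symm)).trans ha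
  refine ⟨(a, b), ⟨hab, hbN, fun k hk1 hk2 => ?_, ?_, ?_⟩, ha⟩
  · exact (lcpP_eq_lrs_iff hSA hm (by omega) (by omega)).2
      (by rw [hall (k := k - 1) (by omega) (by omega), hall hk1.le hk2])
  · refine or_iff_not_imp_left.2 fun ha0 heq => ?_
    have hprev := (lcpP_eq_lrs_iff hSA hm (Nat.pos_of_ne_zero ha0) haN).1 heq
    have := S.min'_le (a - 1) (hmemS.2 ⟨by omega, hprev.trans ha⟩)
    omega
  · refine or_iff_not_imp_left.2 fun hbN' heq => ?_
    have hnext := (lcpP_eq_lrs_iff hSA hm (by omega) (by omega)).1 heq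
    rw [Nat.add_sub_cancel] at hnext
    have := S.le_max' (b + 1) (hmemS.2 ⟨by omega, hnext.symm.trans hb⟩)
    omega

theorem failCand_iff (hSA : IsSuffixArray m SA) (hm : [⊥] <:+ m) {u : ℕ × ℕ}
    (hu : u ∈ DecompBWT m SA) {k : ℕ} :
    FailCand m SA u.1 k ↔ k < m.length ∧ strPart m SA k <+: strPart m SA u.1 ∧
      strPart m SA k ≠ strPart m SA u.1 := by
  have hiN : u.1 < m.length := hu.1.trans_lt hu.2.1
  constructor
  · rintro ⟨hki, hlcp⟩
    have htake : (m.drop (SA u.1)).take (lrs m SA k) = (m.drop (SA k)).take (lrs m SA k) :=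
      take_eq_take_of_le_lcpLen_succ (fun l => m.drop (SA l)) hki.le fun l hkl hlu => by
        have := hlcp (l + 1) (by omega) hlu
        rw [lcpP, if_neg (by omega), Nat.add_sub_cancel] at this
        exact this.trans (min_le_left _ _)
    rw [lrs_eq_length_strPart, ← prefix_iff_eq_take.1 (strPart_prefix k)] at htake
    refine ⟨hki.trans hiN,
      prefix_sepPrefix (htake ▸ take_prefix _ _) (bot_not_mem_sepPrefix _), fun heq => ?_⟩
    refine hu.2.2.2.1.resolve_left (by omega) ((lcpP_eq_lrs_iff hSA hm (by omega) hiN).2 ?_)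
    rw [strPart_eq_of_between hSA hm (j := u.1 - 1) (by omega) (by omega) hiN heq, heq]
  · rintro ⟨hkN, hpre, hne⟩
    refine ⟨lt_of_strPart_prefix hSA hm hkN hiN hpre hne, fun l hkl hlu => ?_⟩
    have hpu := hpre.trans (strPart_prefix u.1)
    have hpl := prefix_drop_of_between hSA (strPart_prefix k) hpu hkl.le hlu hiN
    have hpl1 := prefix_drop_of_between hSA (strPart_prefix k) hpu
      (by omega : k ≤ l - 1) (by omega) hiN
    rw [lcpP, if_neg (by omega), lrs_eq_length_strPart, lrs_eq_length_strPart]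
    exact le_min (length_le_lcpLen_of_prefix hpl1 hpl)
      (prefix_sepPrefix hpl (bot_not_mem_sepPrefix _)).length_le

end Blocks

section FailureLinks

variable [LinearOrder α] {m : List (WithBot α)} {SA : ℕ → ℕ}

theorem bijOn_decPre (hSA : IsSuffixArray m SA) (hm : [⊥] <:+ m) :
    Set.BijOn (decPre m SA) (DecompBWT m SA) (reverse '' strParts m SA) := by
  refine ⟨fun u hu => ?_, fun u hu v hv h => ?_, ?_⟩
  · rw [decPre_eq_reverse_strPart]
    exact Set.mem_image_of_mem _ (Set.mem_image_of_mem _ (hu.1.trans_lt hu.2.1))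
  · rw [decPre_eq_reverse_strPart, decPre_eq_reverse_strPart] at h
    exact eq_of_strPart_eq hSA hm hu hv (reverse_injective h)
  · rintro _ ⟨_, ⟨i, hi, rfl⟩, rfl⟩
    obtain ⟨u, hu, h⟩ := exists_mem_DecompBWT_strPart_eq hSA hm hi
    exact ⟨u, hu, by rw [decPre_eq_reverse_strPart, h]⟩

/-- Longer string parts sit at larger ranks, so the largest failure candidate of `u` lies in
the block of the longest proper prefix of the string part of `u`. -/
theorem mem_AF_iff_ACTedge (hSA : IsSuffixArray m SA) (hm : [⊥] <:+ m) {u v : ℕ × ℕ}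
    (hu : u ∈ DecompBWT m SA) (hv : v ∈ DecompBWT m SA) :
    (u, v) ∈ AF m SA ↔ ACTedge (strParts m SA) (strPart m SA v.1) (strPart m SA u.1) := by
  have huN : u.1 < m.length := hu.1.trans_lt hu.2.1
  have hvN : v.1 < m.length := hv.1.trans_lt hv.2.1
  constructor
  · rintro ⟨-, -, k, hk, hmax, hvk1, hvk2⟩
    obtain ⟨hkN, hpre, hne⟩ := (failCand_iff hSA hm hu).1 hk
    rw [← strPart_eq_of_mem_DecompBWT hSA hm hv hvk1 hvk2]
    refine ⟨⟨k, hkN, rfl⟩, ⟨u.1, huN, rfl⟩, hne, hpre, ?_⟩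
    rintro _ ⟨j, hjN, rfl⟩ hne' hpre'
    have hjk := hmax j ((failCand_iff hSA hm hu).2 ⟨hjN, hpre', hne'⟩)
    by_contra! hlen
    have hkj := prefix_of_prefix_length_le hpre hpre' hlen.le
    exact hjk.not_gt (lt_of_strPart_prefix hSA hm hkN hjN hkj (fun h => hlen.ne (h ▸ rfl)))
  · rintro ⟨-, -, hne, hpre, hmax⟩
    have hv2 := strPart_eq_of_mem_DecompBWT hSA hm hv hv.1 le_rfl
    refine ⟨hu, hv, v.2, (failCand_iff hSA hm hu).2 ⟨hv.2.1, hv2 ▸ hpre, hv2 ▸ hne⟩,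
      fun k hk => ?_, hv.1, le_rfl⟩
    obtain ⟨hkN, hpre', hne'⟩ := (failCand_iff hSA hm hu).1 hk
    have hkv := prefix_of_prefix_length_le hpre' hpre (hmax _ ⟨k, hkN, rfl⟩ hne' hpre')
    rcases eq_or_ne (strPart m SA k) (strPart m SA v.1) with heq | hne''
    · exact (mem_Icc_of_strPart_eq hSA hm hv hkN heq).2
    · exact ((lt_of_strPart_prefix hSA hm hkN hvN hkv hne'').trans_le hv.1).le

end FailureLinks

theorem bot_suffix_mP (P : OSS α) : [⊥] <:+ mP P := by
  obtain ⟨L, t, h⟩ := (eq_nil_or_concat P.strs).resolve_left P.strs_ne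
  rw [mP, h, concat_eq_append, map_append, flatten_append, map_singleton, flatten_singleton]
  exact (suffix_append _ _).trans (suffix_append _ _)

section MultiString

variable [LinearOrder α]

theorem exists_sepPrefix_drop_flatten_iff (L : List (List α)) (x : List (WithBot α)) :
    (∃ p < ((L.map fun s => s.map sym ++ [⊥]).flatten).length,
      sepPrefix (((L.map fun s => s.map sym ++ [⊥]).flatten).drop p) = x) ↔
    ∃ t ∈ L, ∃ s, s <:+ t ∧ x = s.map sym := by
  have hsep (s : List α) (r : List (WithBot α)) : sepPrefix (s.map sym ++ ⊥ :: r) = s.map sym :=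
    sepPrefix_append_bot_cons (by simp [sym]) r
  induction L with
  | nil => simp
  | cons t L ih =>
    simp only [map_cons, flatten_cons, mem_cons, exists_eq_or_imp, ← ih]
    constructor
    · rintro ⟨p, hp, rfl⟩
      by_cases hpt : p ≤ t.length
      · refine Or.inl ⟨t.drop p, drop_suffix p t, ?_⟩
        rw [append_assoc, singleton_append, drop_append_of_le_length (by simpa using hpt),
          ← map_drop, hsep]
      · obtain ⟨q, rfl⟩ : ∃ q, p = (t.map sym ++ [⊥]).length + q :=
          ⟨p - (t.length + 1), by simp; omega⟩
        exact Or.inr ⟨q, by simp only [length_append] at hp ⊢; omega,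
          by rw [drop_length_add_append]⟩
    · rintro (⟨s, ⟨u, rfl⟩, rfl⟩ | ⟨q, hq, rfl⟩)
      · refine ⟨u.length, by simp, ?_⟩
        rw [map_append, append_assoc, append_assoc, drop_left' (length_map _), singleton_append,
          hsep]
      · exact ⟨(t.map sym ++ [⊥]).length + q, by simp only [length_append] at hq ⊢; omega,
          by rw [drop_length_add_append]⟩

theorem revPrefixes_eq_image_strParts (P : OSS α) {SA : ℕ → ℕ}
    (hSA : IsSuffixArray (mP P) SA) : revPrefixes P = reverse '' strParts (mP P) SA := by
  have hparts (x : List (WithBot α)) :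
      x ∈ strParts (mP P) SA ↔ ∃ t ∈ P.strs, ∃ s, s <:+ t ∧ x = s.map sym := by
    rw [← exists_sepPrefix_drop_flatten_iff, ← mP]
    constructor
    · rintro ⟨i, hi, rfl⟩
      exact ⟨SA i, hSA.1.1 hi, rfl⟩
    · rintro ⟨p, hp, rfl⟩
      obtain ⟨i, hi, rfl⟩ := hSA.1.2.2 hp
      exact ⟨i, hi, rfl⟩
  ext r
  rw [reverse_involutive.image_eq_preimage_symm, Set.mem_preimage, hparts]
  refine exists_congr fun t => and_congr_right fun _ => ?_
  rw [← suffix_map_iff, ← reverse_prefix, reverse_reverse, map_reverse]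

end MultiString

theorem AF_iso_ACFL_general [LinearOrder α] (P : OSS α) (SA : ℕ → ℕ)
    (hSA : IsSuffixArray (mP P) SA) :
    Set.BijOn (decPre (mP P) SA) (DecompBWT (mP P) SA) (revPrefixes P) ∧
    ∀ u v : ℕ × ℕ, u ∈ DecompBWT (mP P) SA → v ∈ DecompBWT (mP P) SA →
      ((u, v) ∈ AF (mP P) SA ↔
        ACFLedge (revPrefixes P) (decPre (mP P) SA u) (decPre (mP P) SA v)) := by
  have hm := bot_suffix_mP P
  rw [revPrefixes_eq_image_strParts P hSA]
  refine ⟨bijOn_decPre hSA hm, fun u v hu hv => ?_⟩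
  rw [decPre_eq_reverse_strPart, decPre_eq_reverse_strPart, ACFLedge_image_reverse_iff]
  exact mem_AF_iff_ACTedge hSA hm hu hv

/-- `(u,v) ∈ A_F(P)` iff `Dec_Pre[v]` is the longest proper suffix of
`Dec_Pre[u]` among the elements of `Prefix(←P.S)`; consequently (together with the
bijectivity of `Dec_Pre`) the graph `(Decomp_BWT(P), A_F(P))` is isomorphic, via
`Dec_Pre`, to the Aho–Corasick failure-link graph `ACFL(←P.S)`. -/
theorem AF_iso_ACFL [Fintype α] [LinearOrder α] (P : OSS α) (SA : ℕ → ℕ)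
    (hSA : IsSuffixArray (mP P) SA) :
    Set.BijOn (decPre (mP P) SA) (DecompBWT (mP P) SA) (revPrefixes P) ∧
    ∀ u v : ℕ × ℕ, u ∈ DecompBWT (mP P) SA → v ∈ DecompBWT (mP P) SA →
      ((u, v) ∈ AF (mP P) SA ↔
        ACFLedge (revPrefixes P) (decPre (mP P) SA u) (decPre (mP P) SA v)) :=
  AF_iso_ACFL_general P SA hSA

end BwtXbw
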